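/- Let L ≥ 3 be an integer, let ω : {0, …, L} → ℝ and r : {1, …, L} → ℝ be positive, let ψ(m) = (ω_{m−1}+ω_m)/(r_m ω_{m−1} ω_m), Φ̲(m) = Σ_{i=1}^m ψ(i), Φ̄(m) = Σ_{i=m+1}^L ψ(i), and S(a,b) = Φ̲(a)Φ̲(b) + Φ̄(a)Φ̄(b). Then for every 1 ≤ i ≤ L−2, with Σr := r_i + r_{i+1} + r_{i+2}: (r_i/Σr) · (ω_{i−1}/(ω_{i−1}+ω_i)) · (S(i−1, i+1) − S(i, i+1)) + (r_{i+1}/Σr) · ( ∫₀¹ [p²·S(i+1,i+1) + 2p(1−p)·S(i,i+1) + (1−p)²·S(i,i)] dBeta(ω_{i+1}/2, ω_i/2; p) − S(i, i+1) ) + (r_{i+2}/Σr) · (ω_{i+2}/(ω_{i+1}+ω_{i+2})) · (S(i, i+2) − S(i, i+1)) = − ψ(i+1)² · (2 r_{i+1}/Σr) · ω_i ω_{i+1} / ((ω_i+ω_{i+1})(ω_i+ω_{i+1}+2)). In particular this expected increment is strictly negative. (This is the drift of the functional S when the two dual particles occupy the adjacent interior sites i and i+1.) -/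

import Mathlib

open Real

/-- `ψ(m) = (ω_{m−1} + ω_m)/(r_m ω_{m−1} ω_m)`. -/
noncomputable def psi (ω r : ℕ → ℝ) (m : ℕ) : ℝ :=
  (ω (m - 1) + ω m) / (r m * ω (m - 1) * ω m)

/-- `Φ̲(m) = Σ_{i=1}^m ψ(i)`. -/
noncomputable def phiLow (ω r : ℕ → ℝ) (m : ℕ) : ℝ :=
  ∑ i ∈ Finset.Icc 1 m, psi ω r i

/-- `Φ̄(m) = Σ_{i=m+1}^L ψ(i)`. -/
noncomputable def phiHigh (L : ℕ) (ω r : ℕ → ℝ) (m : ℕ) : ℝ :=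
  ∑ i ∈ Finset.Icc (m + 1) L, psi ω r i

/-- `S(a,b) = Φ̲(a)Φ̲(b) + Φ̄(a)Φ̄(b)`. -/
noncomputable def Sfun (L : ℕ) (ω r : ℕ → ℝ) (a b : ℕ) : ℝ :=
  phiLow ω r a * phiLow ω r b + phiHigh L ω r a * phiHigh L ω r b

/-- Integration of `f` against the `Beta(α, β)` density on `(0,1)`. -/
noncomputable def betaInt (α β : ℝ) (f : ℝ → ℝ) : ℝ :=
  ∫ p in Set.Ioo (0 : ℝ) 1,
    (p ^ (α - 1) * (1 - p) ^ (β - 1) /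
      (Real.Gamma α * Real.Gamma β / Real.Gamma (α + β))) * f p

/-!
S(a, b) is a bilinear form in the vectors (Φ̲, Φ̄) at the two positions, so moving one particle
across an edge m changes S by ±ψ(m)·(Φ̲ − Φ̄) evaluated at the other particle. By the martingale
relation, the rate-weighted single-particle jumps to i − 1 and i + 2 contribute ∓(Φ̲ − Φ̄)/ω. The
Beta(ω_{i+1}/2, ω_i/2) resampling of the pair contributes the first two Beta moments: its part
linear in Φ̲ − Φ̄ cancels the single jumps, and what is left is −2 r_{i+1} ψ(i+1)² E[p(1 − p)],
which is the stated negative drift.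
-/

namespace ProbabilityTheory

open MeasureTheory Set

lemma beta_add_one_left {α β : ℝ} (hα : α ≠ 0) (hαβ : α + β ≠ 0) :
    beta (α + 1) β = α / (α + β) * beta α β := by
  rw [beta, beta, add_right_comm, Real.Gamma_add_one hα, Real.Gamma_add_one hαβ, mul_assoc,
    mul_div_mul_comm]

lemma beta_add_one_right {α β : ℝ} (hβ : β ≠ 0) (hαβ : α + β ≠ 0) :
    beta α (β + 1) = β / (α + β) * beta α β := by
  rw [beta, beta, ← add_assoc, Real.Gamma_add_one hβ, Real.Gamma_add_one hαβ, mul_left_comm,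
    mul_div_mul_comm]

lemma integral_Ioo_rpow_mul_one_sub_rpow {α β : ℝ} (hα : 0 < α) (hβ : 0 < β) :
    ∫ x in Ioo (0 : ℝ) 1, x ^ (α - 1) * (1 - x) ^ (β - 1) = beta α β := by
  have hconv : IntegrableOn (fun x : ℝ => (x : ℂ) ^ ((α : ℂ) - 1) * (1 - (x : ℂ)) ^ ((β : ℂ) - 1))
      (Ioc 0 1) := by
    rw [← intervalIntegrable_iff_integrableOn_Ioc_of_le zero_le_one]
    exact Complex.betaIntegral_convergent (by simpa) (by simpa)
  rw [beta_eq_betaIntegralReal α β hα hβ, Complex.betaIntegral,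
    intervalIntegral.integral_of_le zero_le_one, ← RCLike.re_to_complex, ← integral_re hconv,
    integral_Ioc_eq_integral_Ioo]
  refine setIntegral_congr_fun measurableSet_Ioo fun x ⟨hx0, hx1⟩ => ?_
  norm_cast
  rw [← Complex.ofReal_cpow hx0.le, ← Complex.ofReal_cpow (by linarith), RCLike.re_to_complex,
    ← Complex.ofReal_mul, Complex.ofReal_re]

lemma integral_Ioo_rpow_mul_one_sub_rpow_mul_pow {α β : ℝ} (hα : 0 < α) (hβ : 0 < β) (j k : ℕ) :
    ∫ x in Ioo (0 : ℝ) 1, x ^ (α - 1) * (1 - x) ^ (β - 1) * (x ^ j * (1 - x) ^ k)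
      = beta (α + j) (β + k) := by
  rw [← integral_Ioo_rpow_mul_one_sub_rpow (by positivity) (by positivity)]
  refine setIntegral_congr_fun measurableSet_Ioo fun x ⟨hx0, hx1⟩ => ?_
  rw [add_sub_right_comm, add_sub_right_comm β, Real.rpow_add_natCast hx0.ne',
    Real.rpow_add_natCast (sub_pos.2 hx1).ne']
  ring

end ProbabilityTheory

open ProbabilityTheory MeasureTheory Set in
lemma betaInt_quadratic {α β : ℝ} (hα : 0 < α) (hβ : 0 < β) (c₂ c₁ c₀ : ℝ) :
    betaInt α β (fun p => p ^ 2 * c₂ + 2 * (p * (1 - p)) * c₁ + (1 - p) ^ 2 * c₀)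
      = (α * (α + 1) * c₂ + 2 * (α * β) * c₁ + β * (β + 1) * c₀)
          / ((α + β) * (α + β + 1)) := by
  set K : ℕ → ℕ → ℝ → ℝ := fun j k x => x ^ (α - 1) * (1 - x) ^ (β - 1) * (x ^ j * (1 - x) ^ k)
  have hK (j k : ℕ) : ∫ x in Ioo (0 : ℝ) 1, K j k x = beta (α + j) (β + k) :=
    integral_Ioo_rpow_mul_one_sub_rpow_mul_pow hα hβ j k
  have hKint (j k : ℕ) : IntegrableOn (K j k) (Ioo 0 1) :=
    Integrable.of_integral_ne_zero <| by
      rw [hK]; exact (beta_pos (by positivity) (by positivity)).ne'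
  have hsplit (p : ℝ) :
      p ^ (α - 1) * (1 - p) ^ (β - 1) / beta α β
          * (p ^ 2 * c₂ + 2 * (p * (1 - p)) * c₁ + (1 - p) ^ 2 * c₀)
        = c₂ / beta α β * K 2 0 p + (2 * c₁ / beta α β * K 1 1 p + c₀ / beta α β * K 0 2 p) := by
    simp only [K]; ring
  have hα2 : beta (α + 2) β = (α + 1) / (α + β + 1) * (α / (α + β)) * beta α β := by
    rw [show α + 2 = α + 1 + 1 by ring, beta_add_one_left (by positivity) (by positivity),
      beta_add_one_left (by positivity) (by positivity)]
    ring
  have hαβ : beta (α + 1) (β + 1) = β / (α + β + 1) * (α / (α + β)) * beta α β := by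
    rw [beta_add_one_right (by positivity) (by positivity),
      beta_add_one_left (by positivity) (by positivity)]
    ring
  have hβ2 : beta α (β + 2) = (β + 1) / (α + β + 1) * (β / (α + β)) * beta α β := by
    rw [show β + 2 = β + 1 + 1 by ring, beta_add_one_right (by positivity) (by positivity),
      beta_add_one_right (by positivity) (by positivity)]
    ring
  change ∫ p in Ioo 0 1, p ^ (α - 1) * (1 - p) ^ (β - 1) / beta α β * _ = _
  simp only [hsplit]
  have hK11 := (hKint 1 1).const_mul (2 * c₁ / beta α β)
  have hK02 := (hKint 0 2).const_mul (c₀ / beta α β)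
  rw [integral_add ((hKint 2 0).const_mul _) (by exact hK11.add hK02), integral_add hK11 hK02,
    integral_const_mul, integral_const_mul, integral_const_mul, hK, hK, hK]
  push_cast
  rw [add_zero, add_zero, hα2, hαβ, hβ2]
  have := beta_pos hα hβ
  field_simp
  ring

section Chain

variable (L : ℕ) (ω r : ℕ → ℝ)

lemma phiLow_succ (m : ℕ) : phiLow ω r (m + 1) = phiLow ω r m + psi ω r (m + 1) :=
  Finset.sum_Icc_succ_top (by omega) _

lemma phiHigh_eq_psi_add {m : ℕ} (h : m + 1 ≤ L) :
    phiHigh L ω r m = psi ω r (m + 1) + phiHigh L ω r (m + 1) := by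
  rw [phiHigh, phiHigh, ← Finset.add_sum_Ioc_eq_sum_Icc h, Finset.Icc_add_one_left_eq_Ioc]

lemma phiLow_sub_phiHigh_succ {m : ℕ} (h : m + 1 ≤ L) :
    phiLow ω r (m + 1) - phiHigh L ω r (m + 1)
      = phiLow ω r m - phiHigh L ω r m + 2 * psi ω r (m + 1) := by
  rw [phiLow_succ, phiHigh_eq_psi_add L ω r h]
  ring

lemma Sfun_comm (a b : ℕ) : Sfun L ω r a b = Sfun L ω r b a := by
  simp only [Sfun, mul_comm]

lemma Sfun_succ_sub {a : ℕ} (b : ℕ) (h : a + 1 ≤ L) :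
    Sfun L ω r (a + 1) b - Sfun L ω r a b
      = psi ω r (a + 1) * (phiLow ω r b - phiHigh L ω r b) := by
  rw [Sfun, Sfun, phiLow_succ, phiHigh_eq_psi_add L ω r h]
  ring

variable {ω r}

lemma r_mul_psi {m : ℕ} (h₀ : ω (m - 1) ≠ 0) (h₁ : ω m ≠ 0) (hr : r m ≠ 0) :
    r m * psi ω r m = 1 / ω (m - 1) + 1 / ω m := by
  rw [psi]
  field_simp
  ring

/-- The martingale relation for a single particle jumping across edge `m`. -/
lemma weight_pred_mul_r_mul_psi {m : ℕ} (h₀ : 0 < ω (m - 1)) (h₁ : 0 < ω m) (hr : r m ≠ 0) :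
    ω (m - 1) / (ω (m - 1) + ω m) * (r m * psi ω r m) = 1 / ω m := by
  rw [r_mul_psi h₀.ne' h₁.ne' hr]
  field_simp
  ring

lemma weight_succ_mul_r_mul_psi {m : ℕ} (h₀ : 0 < ω m) (h₁ : 0 < ω (m + 1)) (hr : r (m + 1) ≠ 0) :
    ω (m + 1) / (ω m + ω (m + 1)) * (r (m + 1) * psi ω r (m + 1)) = 1 / ω m := by
  rw [r_mul_psi (by simpa using h₀.ne') h₁.ne' hr, Nat.add_sub_cancel]
  field_simp
  ring

end Chain

section Drift

variable {L : ℕ} {ω r : ℕ → ℝ}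

lemma r_mul_weight_pred_mul_Sfun_pred_sub {i : ℕ} (b : ℕ) (hi : 1 ≤ i) (hiL : i ≤ L)
    (h₀ : 0 < ω (i - 1)) (h₁ : 0 < ω i) (hr : r i ≠ 0) :
    r i * (ω (i - 1) / (ω (i - 1) + ω i)) * (Sfun L ω r (i - 1) b - Sfun L ω r i b)
      = -((phiLow ω r b - phiHigh L ω r b) / ω i) := by
  have hS := Sfun_succ_sub L ω r b (by omega : i - 1 + 1 ≤ L)
  rw [Nat.sub_add_cancel hi] at hS
  rw [← neg_sub, hS]
  linear_combination (-(phiLow ω r b - phiHigh L ω r b)) * weight_pred_mul_r_mul_psi h₀ h₁ hr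

lemma r_mul_weight_succ_mul_Sfun_succ_sub {i : ℕ} (a : ℕ) (hiL : i + 1 ≤ L)
    (h₀ : 0 < ω i) (h₁ : 0 < ω (i + 1)) (hr : r (i + 1) ≠ 0) :
    r (i + 1) * (ω (i + 1) / (ω i + ω (i + 1))) * (Sfun L ω r a (i + 1) - Sfun L ω r a i)
      = (phiLow ω r a - phiHigh L ω r a) / ω i := by
  rw [Sfun_comm L ω r a, Sfun_comm L ω r a, Sfun_succ_sub L ω r a hiL]
  linear_combination (phiLow ω r a - phiHigh L ω r a) * weight_succ_mul_r_mul_psi h₀ h₁ hr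

lemma betaInt_Sfun_sub {i : ℕ} (hiL : i + 1 ≤ L) (h₀ : 0 < ω i) (h₁ : 0 < ω (i + 1)) :
    betaInt (ω (i + 1) / 2) (ω i / 2) (fun p =>
        p ^ 2 * Sfun L ω r (i + 1) (i + 1) + 2 * (p * (1 - p)) * Sfun L ω r i (i + 1)
          + (1 - p) ^ 2 * Sfun L ω r i i) - Sfun L ω r i (i + 1)
      = psi ω r (i + 1)
          * (ω (i + 1) * (ω (i + 1) + 2) * (phiLow ω r (i + 1) - phiHigh L ω r (i + 1))
            - ω i * (ω i + 2) * (phiLow ω r i - phiHigh L ω r i))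
          / ((ω i + ω (i + 1)) * (ω i + ω (i + 1) + 2)) := by
  have hS₁ := Sfun_succ_sub L ω r (i + 1) hiL
  have hS₀ := Sfun_succ_sub L ω r i hiL
  rw [Sfun_comm L ω r (i + 1) i] at hS₀
  rw [betaInt_quadratic (by positivity) (by positivity)]
  field_simp
  linear_combination (ω i + ω (i + 1)) * (ω i + ω (i + 1) + 2)
    * (ω (i + 1) * (ω (i + 1) + 2) * hS₁ - ω i * (ω i + 2) * hS₀)

end Drift

theorem drift_adjacent_sites_general (L : ℕ) (ω r : ℕ → ℝ)
    (hω : ∀ m, m ≤ L → 0 < ω m) (hr : ∀ m, 1 ≤ m → m ≤ L → 0 < r m)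
    (i : ℕ) (hi1 : 1 ≤ i) (hi2 : i ≤ L - 2) :
    (r i / (r i + r (i + 1) + r (i + 2))) * (ω (i - 1) / (ω (i - 1) + ω i)) *
          (Sfun L ω r (i - 1) (i + 1) - Sfun L ω r i (i + 1))
        + (r (i + 1) / (r i + r (i + 1) + r (i + 2))) *
          (betaInt (ω (i + 1) / 2) (ω i / 2) (fun p =>
              p ^ 2 * Sfun L ω r (i + 1) (i + 1) +
                2 * (p * (1 - p)) * Sfun L ω r i (i + 1) +
                (1 - p) ^ 2 * Sfun L ω r i i)
            - Sfun L ω r i (i + 1))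
        + (r (i + 2) / (r i + r (i + 1) + r (i + 2))) *
          (ω (i + 2) / (ω (i + 1) + ω (i + 2))) *
          (Sfun L ω r i (i + 2) - Sfun L ω r i (i + 1))
      = -((psi ω r (i + 1)) ^ 2 * (2 * r (i + 1) / (r i + r (i + 1) + r (i + 2))) *
            (ω i * ω (i + 1) / ((ω i + ω (i + 1)) * (ω i + ω (i + 1) + 2))))
      ∧ -((psi ω r (i + 1)) ^ 2 * (2 * r (i + 1) / (r i + r (i + 1) + r (i + 2))) *
            (ω i * ω (i + 1) / ((ω i + ω (i + 1)) * (ω i + ω (i + 1) + 2)))) < 0 := by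
  have hw₀ : 0 < ω (i - 1) := hω _ (by omega)
  have hw₁ : 0 < ω i := hω _ (by omega)
  have hw₂ : 0 < ω (i + 1) := hω _ (by omega)
  have hw₃ : 0 < ω (i + 2) := hω _ (by omega)
  have hr₁ : 0 < r i := hr _ hi1 (by omega)
  have hr₂ : 0 < r (i + 1) := hr _ (by omega) (by omega)
  have hr₃ : 0 < r (i + 2) := hr _ (by omega) (by omega)
  have hψ : psi ω r (i + 1) = (ω i + ω (i + 1)) / (r (i + 1) * ω i * ω (i + 1)) := by
    rw [psi, Nat.add_sub_cancel]
  refine ⟨?_, ?_⟩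
  · simp only [div_mul_eq_mul_div, ← add_div]
    rw [r_mul_weight_pred_mul_Sfun_pred_sub (i + 1) hi1 (by omega) hw₀ hw₁ hr₁.ne',
      betaInt_Sfun_sub (by omega) hw₁ hw₂, show i + 2 = i + 1 + 1 from rfl,
      r_mul_weight_succ_mul_Sfun_succ_sub i (by omega) hw₂ hw₃ hr₃.ne',
      phiLow_sub_phiHigh_succ L ω r (by omega), hψ]
    field_simp
    ring
  · rw [neg_lt_zero, hψ]
    positivity

/-- The drift of the two-particle functional `S` when the dual particles occupy adjacent
interior sites `i` and `i+1`: the expected increment equals the stated explicit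
expression, and in particular it is strictly negative. -/
theorem drift_adjacent_sites (L : ℕ) (hL : 3 ≤ L) (ω r : ℕ → ℝ)
    (hω : ∀ m, m ≤ L → 0 < ω m) (hr : ∀ m, 1 ≤ m → m ≤ L → 0 < r m)
    (i : ℕ) (hi1 : 1 ≤ i) (hi2 : i ≤ L - 2) :
    (r i / (r i + r (i + 1) + r (i + 2))) * (ω (i - 1) / (ω (i - 1) + ω i)) *
          (Sfun L ω r (i - 1) (i + 1) - Sfun L ω r i (i + 1))
        + (r (i + 1) / (r i + r (i + 1) + r (i + 2))) *
          (betaInt (ω (i + 1) / 2) (ω i / 2) (fun p =>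
              p ^ 2 * Sfun L ω r (i + 1) (i + 1) +
                2 * (p * (1 - p)) * Sfun L ω r i (i + 1) +
                (1 - p) ^ 2 * Sfun L ω r i i)
            - Sfun L ω r i (i + 1))
        + (r (i + 2) / (r i + r (i + 1) + r (i + 2))) *
          (ω (i + 2) / (ω (i + 1) + ω (i + 2))) *
          (Sfun L ω r i (i + 2) - Sfun L ω r i (i + 1))
      = -((psi ω r (i + 1)) ^ 2 * (2 * r (i + 1) / (r i + r (i + 1) + r (i + 2))) *
            (ω i * ω (i + 1) / ((ω i + ω (i + 1)) * (ω i + ω (i + 1) + 2))))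
      ∧ -((psi ω r (i + 1)) ^ 2 * (2 * r (i + 1) / (r i + r (i + 1) + r (i + 2))) *
            (ω i * ω (i + 1) / ((ω i + ω (i + 1)) * (ω i + ω (i + 1) + 2)))) < 0 :=
  drift_adjacent_sites_general L ω r hω hr i hi1 hi2
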